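/- arXiv:1305.5400 — 11 statements merged into one kernel-verified Lean document; each statement's English description precedes it below -/
import Mathlib

section
/- Let N be a positive integer and λ an integer, and let L = {(a,b) ∈ ℤ² : a + bλ ≡ 0 (mod N)}. Let e₁, e₂ ∈ L be ℚ-linearly independent vectors, let m be an integer, and let (α, β) ∈ ℚ² be the unique solution of α·e₁ + β·e₂ = (m, 0). Set (a, b) := (m, 0) − round(α)·e₁ − round(β)·e₂, where round(x) denotes a nearest integer to x. Then m ≡ a + λ·b (mod N) and max(|a|, |b|) ≤ max(‖e₁‖∞, ‖e₂‖∞), where ‖(u,v)‖∞ = max(|u|, |v|). -/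
/-- Babai rounding (Lemma 1): given two linearly independent vectors `e₁, e₂` in the
lattice `L = {(a,b) : a + bλ ≡ 0 mod N}`, the rounded decomposition of `(m, 0)` gives
`m ≡ a + λb (mod N)` with `max(|a|,|b|) ≤ max(‖e₁‖∞, ‖e₂‖∞)`. -/
theorem babai_rounding_decomposition
    (N lam : ℤ) (hN : 0 < N) (e₁ e₂ : ℤ × ℤ)
    (he₁ : N ∣ e₁.1 + e₁.2 * lam) (he₂ : N ∣ e₂.1 + e₂.2 * lam)
    (hindep : LinearIndependent ℚ ![((e₁.1 : ℚ), (e₁.2 : ℚ)), ((e₂.1 : ℚ), (e₂.2 : ℚ))])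
    (m : ℤ) (α β : ℚ)
    (hsys1 : α * (e₁.1 : ℚ) + β * (e₂.1 : ℚ) = (m : ℚ))
    (hsys2 : α * (e₁.2 : ℚ) + β * (e₂.2 : ℚ) = 0)
    (a b : ℤ)
    (ha : a = m - round α * e₁.1 - round β * e₂.1)
    (hb : b = -(round α * e₁.2) - round β * e₂.2) :
    N ∣ m - (a + lam * b) ∧
      max |a| |b| ≤ max (max |e₁.1| |e₁.2|) (max |e₂.1| |e₂.2|) := by
  constructor
  · have : m - (a + lam * b)
        = round α * (e₁.1 + e₁.2 * lam) + round β * (e₂.1 + e₂.2 * lam) := by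
      rw [ha, hb]; ring
    rw [this]
    exact dvd_add (Dvd.dvd.mul_left he₁ _) (Dvd.dvd.mul_left he₂ _)
  · set M : ℤ := max (max |e₁.1| |e₁.2|) (max |e₂.1| |e₂.2|) with hM
    have hMQ : (0:ℚ) ≤ (M:ℚ) := by
      have : (0:ℤ) ≤ M := le_trans (abs_nonneg _) (le_trans (le_max_left _ _) (le_max_left _ _))
      exact_mod_cast this
    have h11 : (|e₁.1| : ℚ) ≤ (M:ℚ) := by
      exact_mod_cast le_trans (le_max_left |e₁.1| |e₁.2|) (le_max_left _ _)
    have h12 : (|e₁.2| : ℚ) ≤ (M:ℚ) := by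
      exact_mod_cast le_trans (le_max_right |e₁.1| |e₁.2|) (le_max_left _ _)
    have h21 : (|e₂.1| : ℚ) ≤ (M:ℚ) := by
      exact_mod_cast le_trans (le_max_left |e₂.1| |e₂.2|) (le_max_right _ _)
    have h22 : (|e₂.2| : ℚ) ≤ (M:ℚ) := by
      exact_mod_cast le_trans (le_max_right |e₂.1| |e₂.2|) (le_max_right _ _)
    have hε₁ : |α - round α| ≤ (1:ℚ)/2 := abs_sub_round α
    have hε₂ : |β - round β| ≤ (1:ℚ)/2 := abs_sub_round β
    have haq : (a:ℚ) = (α - round α) * e₁.1 + (β - round β) * e₂.1 := by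
      rw [ha]; push_cast; linarith [hsys1]
    have hbq : (b:ℚ) = (α - round α) * e₁.2 + (β - round β) * e₂.2 := by
      rw [hb]; push_cast; linarith [hsys2]
    have key : ∀ (x y : ℤ) (z : ℤ), (z:ℚ) = (α - round α) * x + (β - round β) * y →
        (|x|:ℚ) ≤ (M:ℚ) → (|y|:ℚ) ≤ (M:ℚ) → |z| ≤ M := by
      intro x y z hz hx hy
      have : (|z|:ℚ) ≤ (M:ℚ) := by
        calc (|z|:ℚ) = |(α - round α) * x + (β - round β) * y| := by rw [hz]
        _ ≤ |(α - round α) * x| + |(β - round β) * y| := abs_add_le _ _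
        _ = |α - round α| * |(x:ℚ)| + |β - round β| * |(y:ℚ)| := by rw [abs_mul, abs_mul]
        _ ≤ (1/2) * (M:ℚ) + (1/2) * (M:ℚ) := by
            gcongr <;> positivity
        _ = (M:ℚ) := by ring
      exact_mod_cast this
    exact max_le (key _ _ _ haq h11 h21) (key _ _ _ hbq h12 h22)
end

section
/- Let p be a prime, d ≥ 1 and r, t integers, and ε ∈ {1, −1}. Suppose d·r² = 2p + ε·t, |t| ≤ 2p, and 4·d·p ≤ (p−1)². Set M := p² + 1 − t, and let N ≥ 1 be a divisor of M. Let λ be an integer with r·λ ≡ 1 + εp (mod N) and λ² ≡ ε·d (mod N). For any integer m, define a := m − round(m(1+εp)/M)·(1+εp) + round(m·r/M)·ε·d·r and b := round(m(1+εp)/M)·r − round(m·r/M)·(1+εp), where round denotes nearest-integer rounding of a rational number. Then m ≡ a + b·λ (mod N) and max(|a|, |b|) ≤ p + 1. -/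
/-- Proposition 2: explicit short scalar decompositions. Given `d·r² = 2p + ε·t`,
`|t| ≤ 2p`, `4dp ≤ (p−1)²`, `M = p² + 1 − t`, `N ∣ M`, and eigenvalue congruences for `λ`,
the explicitly rounded `(a, b)` satisfy `m ≡ a + bλ (mod N)` and `max(|a|,|b|) ≤ p + 1`. -/
theorem short_scalar_decomposition
    (p : ℤ) (hp : Prime p) (d r t N ε lam m M : ℤ)
    (hd : 1 ≤ d) (hε : ε = 1 ∨ ε = -1)
    (htr : d * r ^ 2 = 2 * p + ε * t) (ht : |t| ≤ 2 * p)
    (hdp : 4 * d * p ≤ (p - 1) ^ 2)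
    (hM : M = p ^ 2 + 1 - t)
    (hN : 1 ≤ N) (hNM : N ∣ M)
    (hlam1 : N ∣ r * lam - (1 + ε * p)) (hlam2 : N ∣ lam ^ 2 - ε * d)
    (a b : ℤ)
    (ha : a = m - round (((m * (1 + ε * p) : ℤ) : ℚ) / (M : ℚ)) * (1 + ε * p)
            + round (((m * r : ℤ) : ℚ) / (M : ℚ)) * (ε * d * r))
    (hb : b = round (((m * (1 + ε * p) : ℤ) : ℚ) / (M : ℚ)) * r
            - round (((m * r : ℤ) : ℚ) / (M : ℚ)) * (1 + ε * p)) :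
    N ∣ m - (a + b * lam) ∧ max |a| |b| ≤ p + 1 := by
  have hε2 : ε ^ 2 = 1 := by rcases hε with h | h <;> simp [h]
  have ht' := abs_le.mp ht
  have hp2 : 2 ≤ p := by
    have h := Int.prime_iff_natAbs_prime.mp hp
    have := h.two_le
    omega
  have hM1 : (1 : ℤ) ≤ M := by nlinarith [ht'.1, ht'.2]
  have hMQ : (M : ℚ) ≠ 0 := by
    have : (0:ℚ) < (M:ℚ) := by exact_mod_cast (by linarith : (0:ℤ) < M)
    linarith
  set q1 : ℚ := ((m * (1 + ε * p) : ℤ) : ℚ) / (M : ℚ) with hq1def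
  set q2 : ℚ := ((m * r : ℤ) : ℚ) / (M : ℚ) with hq2def
  set c1 : ℤ := round q1 with hc1def
  set c2 : ℤ := round q2 with hc2def
  obtain ⟨x, hx⟩ := hlam1
  obtain ⟨y, hy⟩ := hlam2
  constructor
  · exact ⟨-c1 * x + c2 * (r * y - lam * x), by
      rw [ha, hb]
      linear_combination (-c1 - c2 * lam) * hx + c2 * r * hy⟩
  · -- integer identity: (1+εp)^2 - ε*d*r^2 = M
    have hid : (1 + ε * p) ^ 2 - ε * (d * r ^ 2) = M := by
      rw [hM]
      linear_combination (-ε) * htr + (p ^ 2 - t) * hε2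
    have hidQ : ((1:ℚ) + ε * p) ^ 2 - (ε:ℚ) * (d * r ^ 2) = (M:ℚ) := by
      exact_mod_cast congrArg (fun z : ℤ => (z : ℚ)) hid
    have key1 : (m : ℚ) = q1 * (1 + (ε:ℚ) * p) - q2 * ((ε:ℚ) * d * r) := by
      rw [hq1def, hq2def, div_mul_eq_mul_div, div_mul_eq_mul_div, div_sub_div_same,
        eq_div_iff hMQ]
      push_cast
      linear_combination (-(m : ℚ)) * hidQ
    have key2 : q1 * (r:ℚ) - q2 * (1 + (ε:ℚ) * p) = 0 := by
      rw [hq1def, hq2def, div_mul_eq_mul_div, div_mul_eq_mul_div, div_sub_div_same,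
        div_eq_zero_iff]
      left
      push_cast
      ring
    have haQ : (a : ℚ) = (q1 - c1) * (1 + (ε:ℚ) * p) - (q2 - c2) * ((ε:ℚ) * d * r) := by
      rw [ha]; push_cast; linear_combination key1
    have hbQ : (b : ℚ) = -((q1 - c1) * (r:ℚ)) + (q2 - c2) * (1 + (ε:ℚ) * p) := by
      rw [hb]; push_cast; linear_combination key2
    have he1 : |q1 - (c1:ℚ)| ≤ 1/2 := abs_sub_round q1
    have he2 : |q2 - (c2:ℚ)| ≤ 1/2 := abs_sub_round q2
    have hεt : ε * t ≤ 2 * p := by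
      rcases hε with h | h <;> rw [h] <;> linarith [ht'.1, ht'.2]
    have hsq : (d * r) ^ 2 ≤ (p - 1) ^ 2 := by nlinarith
    have hdr : |d * r| ≤ p - 1 := abs_le_of_sq_le_sq hsq (by linarith)
    have hr : |r| ≤ p - 1 := by
      have h1 : |r| ≤ |d * r| := by
        rw [abs_mul]
        nlinarith [abs_nonneg r, abs_nonneg d, le_abs_self d]
      linarith
    have hbound1 : |1 + ε * p| ≤ p + 1 := by
      rcases hε with h | h <;> rw [h, abs_le] <;> constructor <;> omega
    have hbound2 : |ε * d * r| ≤ p - 1 := by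
      rcases hε with h | h <;> rw [h] <;>
        simpa [neg_mul, abs_neg, one_mul] using hdr
    -- cast bounds to ℚ
    have hAQ : |(1 + (ε:ℚ) * p)| ≤ (p:ℚ) + 1 := by
      have : |((1 + ε * p : ℤ) : ℚ)| ≤ ((p + 1 : ℤ) : ℚ) := by
        rw [← Int.cast_abs]; exact_mod_cast hbound1
      push_cast at this; convert this using 2 <;> push_cast <;> ring
    have hBQ : |((ε:ℚ) * d * r)| ≤ (p:ℚ) - 1 := by
      have : |((ε * d * r : ℤ) : ℚ)| ≤ ((p - 1 : ℤ) : ℚ) := by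
        rw [← Int.cast_abs]; exact_mod_cast hbound2
      push_cast at this; convert this using 2 <;> push_cast <;> ring
    have hrQ : |(r:ℚ)| ≤ (p:ℚ) - 1 := by
      have : |((r : ℤ) : ℚ)| ≤ ((p - 1 : ℤ) : ℚ) := by
        rw [← Int.cast_abs]; exact_mod_cast hr
      push_cast at this; exact this
    have haq : |(a:ℚ)| ≤ (p:ℚ) := by
      rw [haQ]
      calc |(q1 - c1) * (1 + (ε:ℚ) * p) - (q2 - c2) * ((ε:ℚ) * d * r)|
          ≤ |(q1 - c1) * (1 + (ε:ℚ) * p)| + |(q2 - c2) * ((ε:ℚ) * d * r)| := abs_sub _ _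
        _ = |q1 - (c1:ℚ)| * |1 + (ε:ℚ) * p| + |q2 - (c2:ℚ)| * |(ε:ℚ) * d * r| := by
            rw [abs_mul, abs_mul]
        _ ≤ (1/2) * ((p:ℚ) + 1) + (1/2) * ((p:ℚ) - 1) := by
            have h1 := mul_le_mul he1 hAQ (abs_nonneg _) (by norm_num)
            have h2 := mul_le_mul he2 hBQ (abs_nonneg _) (by norm_num)
            linarith
        _ = (p:ℚ) := by ring
    have hbq : |(b:ℚ)| ≤ (p:ℚ) := by
      rw [hbQ]
      calc |-((q1 - c1) * (r:ℚ)) + (q2 - c2) * (1 + (ε:ℚ) * p)|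
          ≤ |-((q1 - c1) * (r:ℚ))| + |(q2 - c2) * (1 + (ε:ℚ) * p)| := abs_add_le _ _
        _ = |q1 - (c1:ℚ)| * |(r:ℚ)| + |q2 - (c2:ℚ)| * |1 + (ε:ℚ) * p| := by
            rw [abs_neg, abs_mul, abs_mul]
        _ ≤ (1/2) * ((p:ℚ) - 1) + (1/2) * ((p:ℚ) + 1) := by
            have h1 := mul_le_mul he1 hrQ (abs_nonneg _) (by norm_num)
            have h2 := mul_le_mul he2 hAQ (abs_nonneg _) (by norm_num)
            linarith
        _ = (p:ℚ) := by ring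
    have hA : |a| ≤ p := by
      have h : ((|a| : ℤ) : ℚ) ≤ ((p : ℤ) : ℚ) := by rw [Int.cast_abs]; exact haq
      exact_mod_cast h
    have hB : |b| ≤ p := by
      have h : ((|b| : ℤ) : ℚ) ≤ ((p : ℤ) : ℚ) := by rw [Int.cast_abs]; exact hbq
      exact_mod_cast h
    exact max_le (by linarith) (by linarith)
end

section
/- Let p > 3 be a prime and K a finite field with p² elements. Fix δ ∈ K with δ ≠ 0 and δ^p = −δ, and let s ∈ K satisfy s^p = s. Set C₂(s) = 9(1 + sδ), and let E_{2,s} be the short Weierstrass curve y² = x³ + 2(C₂(s) − 24)x − 8(C₂(s) − 16) over K. Then the discriminant of E_{2,s} equals 2⁹·3⁶·(1 − s²δ²)·(1 + sδ) and is nonzero; in particular E_{2,s} is an elliptic curve over K. -/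
/-- The discriminant of `E_{2,s} : y² = x³ + 2(C₂(s) − 24)x − 8(C₂(s) − 16)`, where
`C₂(s) = 9(1 + sδ)`, equals `2⁹·3⁶·(1 − s²δ²)·(1 + sδ)` and is nonzero. -/
theorem degree2_family_discriminant
    (p : ℕ) (hp : p.Prime) (hp3 : 3 < p)
    (K : Type*) [Field K] [Fintype K] (hK : Fintype.card K = p ^ 2)
    (δ : K) (hδ : δ ≠ 0) (hδp : δ ^ p = -δ)
    (s : K) (hs : s ^ p = s)
    (W : WeierstrassCurve K)
    (hW : W = { a₁ := 0, a₂ := 0, a₃ := 0,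
                a₄ := 2 * (9 * (1 + s * δ) - 24),
                a₆ := -8 * (9 * (1 + s * δ) - 16) }) :
    W.Δ = 2 ^ 9 * 3 ^ 6 * (1 - s ^ 2 * δ ^ 2) * (1 + s * δ) ∧ W.Δ ≠ 0 := by
  have hΔ : W.Δ = 2 ^ 9 * 3 ^ 6 * (1 - s ^ 2 * δ ^ 2) * (1 + s * δ) := by
    subst hW
    simp only [WeierstrassCurve.Δ, WeierstrassCurve.b₂, WeierstrassCurve.b₄,
      WeierstrassCurve.b₆, WeierstrassCurve.b₈]
    ring
  refine ⟨hΔ, ?_⟩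
  -- char K = p
  have hchar : ringChar K = p := by
    obtain ⟨n, hq, hcard⟩ := FiniteField.card K (ringChar K)
    have heq : ringChar K ^ (n : ℕ) = p ^ 2 := by rw [← hcard, hK]
    have hqprime : (ringChar K).Prime := CharP.char_is_prime K (ringChar K)
    have hdvd : ringChar K ∣ p ^ 2 := heq ▸ dvd_pow_self (ringChar K) n.ne_zero
    exact (Nat.prime_dvd_prime_iff_eq hqprime hp).mp (hqprime.dvd_of_dvd_pow hdvd)
  -- p odd, and 2 ≠ 0, 3 ≠ 0 in K
  have hp2 : (2 : K) ≠ 0 := by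
    intro h
    have := (CharP.cast_eq_zero_iff K (ringChar K) 2).mp (by simpa [hchar] using h)
    rw [hchar] at this
    have := Nat.le_of_dvd (by norm_num) this
    omega
  have hodd : Odd p := hp.odd_of_ne_two (by omega)
  -- key: 1 + sδ ≠ 0 and 1 - sδ ≠ 0
  have key : ∀ c : K, c = 1 ∨ c = -1 → 1 + c * (s * δ) ≠ 0 := by
    intro c hc h
    have hsd : s * δ = -c := by
      rcases hc with rfl | rfl
      · linear_combination h
      · linear_combination -h
    have h1 : (s * δ) ^ p = -(s * δ) := by
      rw [mul_pow, hs, hδp, mul_neg]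
    rw [hsd] at h1
    have hcp : (-c) ^ p = -c := by
      rcases hc with rfl | rfl
      · simp [hodd.neg_one_pow]
      · simp [hodd.neg_one_pow]
    rw [hcp] at h1
    have hc0 : c ≠ 0 := by rcases hc with rfl | rfl <;> norm_num
    have : (2 : K) * c = 0 := by linear_combination -h1
    exact hp2 ((mul_eq_zero.mp this).resolve_right hc0)
  have h1 : 1 + s * δ ≠ 0 := by simpa using key 1 (Or.inl rfl)
  have h2 : 1 - s * δ ≠ 0 := by
    have := key (-1) (Or.inr rfl)
    intro h; exact this (by linear_combination h)
  have h3 : (1 : K) - s ^ 2 * δ ^ 2 ≠ 0 := by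
    intro h
    have : (1 - s * δ) * (1 + s * δ) = 0 := by linear_combination h
    rcases mul_eq_zero.mp this with h' | h'
    · exact h2 h'
    · exact h1 h'
  have h29 : (2 : K) ^ 9 ≠ 0 := pow_ne_zero _ hp2
  have hp3' : (3 : K) ≠ 0 := by
    intro h
    have := (CharP.cast_eq_zero_iff K (ringChar K) 3).mp (by simpa [hchar] using h)
    rw [hchar] at this
    have := Nat.le_of_dvd (by norm_num) this
    omega
  have h36 : (3 : K) ^ 6 ≠ 0 := pow_ne_zero _ hp3'
  rw [hΔ]
  exact mul_ne_zero (mul_ne_zero (mul_ne_zero h29 h36) h3) h1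
end

section
/- Let p > 3 be a prime and K a finite field with p² elements. Fix δ ∈ K with δ ≠ 0 and δ^p = −δ, let s ∈ K satisfy s^p = s, set C₂(s) = 9(1 + sδ), and let E_{2,s} : y² = x³ + 2(C₂(s) − 24)x − 8(C₂(s) − 16) over K. Fix i ∈ K with i² = −2. If (x, y) is an affine point of E_{2,s}(K) with x ≠ 4, then x^p ≠ 4 and the pair (X, Y) with X = −x^p/2 − C₂(s)^p/(x^p − 4) and Y = (y^p/i)·(−1/2 + C₂(s)^p/(x^p − 4)²) again satisfies Y² = X³ + 2(C₂(s) − 24)X − 8(C₂(s) − 16); that is, the map ψ sends affine points of E_{2,s} with x ≠ 4 to affine points of E_{2,s}. -/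
/-!
The point `(4, 0)` has order two on every curve `y² = x³ + 2(C − 24)x − 8(C − 16)`, and the
2-isogeny with that kernel, twisted by `i = √−2`, maps this curve to the one with parameter
`18 − C`. The `p`-power Frobenius maps the curve with parameter `C₂(s)` to the one with
parameter `C₂(s)^p = 9(1 − sδ) = 18 − C₂(s)`, so `ψ`, the composite of the two, maps `E_{2,s}`
to itself.
-/

def E2Equation {K : Type*} [CommRing K] (C x y : K) : Prop :=
  y ^ 2 = x ^ 3 + 2 * (C - 24) * x - 8 * (C - 16)

namespace E2Equation

variable {K L : Type*}

theorem map [CommRing K] [CommRing L] (f : K →+* L) {C x y : K} (h : E2Equation C x y) :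
    E2Equation (f C) (f x) (f y) := by
  have hf := congrArg f h
  simp only [map_sub, map_add, map_mul, map_pow, map_ofNat] at hf
  exact hf

theorem twoIsogeny [Field K] (h2 : (2 : K) ≠ 0) {i C u v : K} (hi : i ^ 2 = -2) (hu : u ≠ 4)
    (h : E2Equation C u v) :
    E2Equation (18 - C) (-u / 2 - C / (u - 4)) (v / i * (-1 / 2 + C / (u - 4) ^ 2)) := by
  have hi0 : i ≠ 0 := by rintro rfl; exact h2 (by linear_combination hi)
  have hu4 : u - 4 ≠ 0 := sub_ne_zero.mpr hu
  unfold E2Equation at *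
  rw [mul_pow, div_pow, hi, h]
  field_simp
  ring

end E2Equation

theorem pow_char_nine_mul_one_add {K : Type*} [CommRing K] (p : ℕ) [Fact p.Prime] [CharP K p]
    {s δ : K} (hs : s ^ p = s) (hδ : δ ^ p = -δ) :
    (9 * (1 + s * δ)) ^ p = 18 - 9 * (1 + s * δ) := by
  have h := map_ofNat (frobenius K p) 9
  rw [frobenius_def] at h
  rw [mul_pow, h, add_pow_char, one_pow, mul_pow, hs, hδ]
  ring

theorem degree2_endomorphism_well_defined_general
    (p : ℕ) (hp : p.Prime) (hp3 : 3 < p)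
    (K : Type*) [Field K] [Fintype K] (hK : Fintype.card K = p ^ 2)
    (δ : K) (hδp : δ ^ p = -δ)
    (s : K) (hs : s ^ p = s)
    (i : K) (hi : i ^ 2 = -2)
    (x y : K)
    (hxy : y ^ 2 = x ^ 3 + 2 * (9 * (1 + s * δ) - 24) * x - 8 * (9 * (1 + s * δ) - 16))
    (hx : x ≠ 4)
    (X Y : K)
    (hX : X = -x ^ p / 2 - (9 * (1 + s * δ)) ^ p / (x ^ p - 4))
    (hY : Y = y ^ p / i * (-1 / 2 + (9 * (1 + s * δ)) ^ p / (x ^ p - 4) ^ 2)) :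
    x ^ p ≠ 4 ∧
      Y ^ 2 = X ^ 3 + 2 * (9 * (1 + s * δ) - 24) * X - 8 * (9 * (1 + s * δ) - 16) := by
  have : Fact p.Prime := ⟨hp⟩
  have : CharP K p := charP_of_card_eq_prime_pow hK
  have h2 : (2 : K) ≠ 0 := Ring.two_ne_zero (by rw [ringChar.eq K p]; omega)
  have hxp : x ^ p ≠ 4 := fun h =>
    hx (frobenius_inj K p (by rw [frobenius_def, h, map_ofNat]))
  have hC : 18 - (9 * (1 + s * δ)) ^ p = 9 * (1 + s * δ) := by
    rw [pow_char_nine_mul_one_add p hs hδp]; ring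
  have hE : E2Equation (9 * (1 + s * δ)) x y := hxy
  have himage := (hE.map (frobenius K p)).twoIsogeny h2 hi hxp
  simp only [frobenius_def, hC] at himage
  exact ⟨hxp, hX ▸ hY ▸ himage⟩

/-- The map `ψ` sends affine points of `E_{2,s}` with `x ≠ 4` to affine points of
`E_{2,s}`: if `(x, y)` lies on the curve and `x ≠ 4`, then `x^p ≠ 4` and the image pair
`(X, Y)` again satisfies the curve equation. -/
theorem degree2_endomorphism_well_defined
    (p : ℕ) (hp : p.Prime) (hp3 : 3 < p)
    (K : Type*) [Field K] [Fintype K] (hK : Fintype.card K = p ^ 2)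
    (δ : K) (hδ : δ ≠ 0) (hδp : δ ^ p = -δ)
    (s : K) (hs : s ^ p = s)
    (i : K) (hi : i ^ 2 = -2)
    (x y : K)
    (hxy : y ^ 2 = x ^ 3 + 2 * (9 * (1 + s * δ) - 24) * x - 8 * (9 * (1 + s * δ) - 16))
    (hx : x ≠ 4)
    (X Y : K)
    (hX : X = -x ^ p / 2 - (9 * (1 + s * δ)) ^ p / (x ^ p - 4))
    (hY : Y = y ^ p / i * (-1 / 2 + (9 * (1 + s * δ)) ^ p / (x ^ p - 4) ^ 2)) :
    x ^ p ≠ 4 ∧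
      Y ^ 2 = X ^ 3 + 2 * (9 * (1 + s * δ) - 24) * X - 8 * (9 * (1 + s * δ) - 16) :=
  degree2_endomorphism_well_defined_general p hp hp3 K hK δ hδp s hs i hi x y hxy hx X Y hX hY
end

section
/- Let p > 3 be a prime and K a finite field with p² elements. Fix δ ∈ K with δ ≠ 0 and δ^p = −δ, let s ∈ K satisfy s^p = s, set C₂(s) = 9(1 + sδ), and let E_{2,s} : y² = x³ + 2(C₂(s) − 24)x − 8(C₂(s) − 16) over K. Fix i ∈ K with i² = −2, and for an affine point (x,y) with x ≠ 4 define ψ(x, y) = ( −x^p/2 − C₂(s)^p/(x^p − 4), (y^p/i)·(−1/2 + C₂(s)^p/(x^p − 4)²) ). Let ε = 1 if p ≡ 5 or 7 (mod 8) and ε = −1 if p ≡ 1 or 3 (mod 8). Then for every affine point P = (x, y) of E_{2,s}(K) with x ≠ 4 such that the x-coordinate of ψ(P) is also ≠ 4, one has ψ(ψ(P)) = [2ε]P in the group E_{2,s}(K). -/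
/-!
Write `c = C₂(s)` and `τ_c = (twoIsogX c, twoIsogY c)`. Since `δ^p = -δ`, Frobenius `φ` swaps
`c` and `18 - c`, so `ψ` is `φ` followed by `τ_{18-c}` and division of `y` by `i`. As `φ` is an
involution on `K`, `ψ ∘ ψ` is `τ_{18-c} ∘ τ_c` followed by division of `y` by `i^p · i`.
The composite `τ_{18-c} ∘ τ_c` is doubling with `y` scaled by `2`, and Euler's criterion gives
`i^p = (-2/p) · i`, so `i^p · i = -2 · (-2/p) = 2ε`.
-/

open WeierstrassCurve.Affine

section TwoIsogeny

variable {F : Type*} [Field F] (c : F) {x y : F}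

def curveE2 : WeierstrassCurve.Affine F :=
  { a₁ := 0, a₂ := 0, a₃ := 0, a₄ := 2 * (c - 24), a₆ := -8 * (c - 16) }

/- `(twoIsogX c, twoIsogY c)` is the 2-isogeny with kernel `{0, (4, 0)}` from `curveE2 c` onto
`-2 Y² = X³ + 2 (c' - 24) X - 8 (c' - 16)` with `c' = 18 - c`, the twist of `curveE2 (18 - c)`
by `-2`. -/
def twoIsogX (x : F) : F := -x / 2 - c / (x - 4)

def twoIsogY (x y : F) : F := y * (-1 / 2 + c / (x - 4) ^ 2)

lemma equation_curveE2_iff :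
    (curveE2 c).Equation x y ↔ y ^ 2 = (x - 4) * (x ^ 2 + 4 * x + 2 * c - 32) := by
  rw [equation_iff]
  simp only [curveE2]
  constructor <;> intro h <;> linear_combination h

lemma negY_curveE2 : (curveE2 c).negY x y = -y := by
  simp [curveE2, negY]

lemma Y_ne_negY_curveE2 (h2 : (2 : F) ≠ 0) (hy : y ≠ 0) : y ≠ (curveE2 c).negY x y := by
  rw [negY_curveE2]
  intro h
  exact hy ((mul_eq_zero.mp (by linear_combination h : (2 : F) * y = 0)).resolve_left h2)

lemma twoIsogX_sub_four (h2 : (2 : F) ≠ 0) (hx : x ≠ 4) :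
    twoIsogX c x - 4 = -(x ^ 2 + 4 * x + 2 * c - 32) / (2 * (x - 4)) := by
  have := sub_ne_zero.mpr hx
  unfold twoIsogX
  field_simp
  ring

lemma inv_twoIsogX_sub_four (h2 : (2 : F) ≠ 0) (hx : x ≠ 4) :
    (twoIsogX c x - 4)⁻¹ = -(2 * (x - 4)) / (x ^ 2 + 4 * x + 2 * c - 32) := by
  rw [twoIsogX_sub_four c h2 hx, neg_div, inv_neg, inv_div, neg_div]

lemma twoIsogX_ne_four_iff (h2 : (2 : F) ≠ 0) (hx : x ≠ 4) :
    twoIsogX c x ≠ 4 ↔ x ^ 2 + 4 * x + 2 * c - 32 ≠ 0 := by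
  rw [ne_eq, ← sub_eq_zero, twoIsogX_sub_four c h2 hx, div_eq_zero_iff, neg_eq_zero]
  simp [h2, sub_eq_zero, hx]

lemma ne_zero_of_twoIsogX_ne_four (h2 : (2 : F) ≠ 0) (h : (curveE2 c).Equation x y)
    (hx : x ≠ 4) (hu : twoIsogX c x ≠ 4) : y ≠ 0 := by
  rintro rfl
  have hy2 := (equation_curveE2_iff c).mp h
  exact mul_ne_zero (sub_ne_zero.mpr hx) ((twoIsogX_ne_four_iff c h2 hx).mp hu)
    (by simpa using hy2.symm)

variable [DecidableEq F]

lemma slope_curveE2 (h2 : (2 : F) ≠ 0) (hy : y ≠ 0) :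
    (curveE2 c).slope x x y y = (3 * x ^ 2 + 2 * (c - 24)) / (2 * y) := by
  rw [slope_of_Y_ne rfl (Y_ne_negY_curveE2 c h2 hy), negY_curveE2]
  simp only [curveE2]
  ring

variable {c} (h2 : (2 : F) ≠ 0) (h : (curveE2 c).Equation x y) (hx : x ≠ 4)
  (hu : twoIsogX c x ≠ 4)
include h2 h hx hu

lemma twoIsogX_twoIsogX :
    twoIsogX (18 - c) (twoIsogX c x) = (curveE2 c).addX x x ((curveE2 c).slope x x y y) := by
  have hx4 := sub_ne_zero.mpr hx
  have hg := (twoIsogX_ne_four_iff c h2 hx).mp hu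
  have hy2 := (equation_curveE2_iff c).mp h
  have hy := ne_zero_of_twoIsogX_ne_four c h2 h hx hu
  rw [slope_curveE2 c h2 hy, twoIsogX, div_eq_mul_inv (18 - c), inv_twoIsogX_sub_four c h2 hx]
  simp only [curveE2, addX, div_pow, mul_pow, hy2]
  unfold twoIsogX
  set g := x ^ 2 + 4 * x + 2 * c - 32 with hg_def
  field_simp
  rw [hg_def]
  ring

lemma twoIsogY_twoIsogY :
    twoIsogY (18 - c) (twoIsogX c x) (twoIsogY c x y) =
      2 * (curveE2 c).addY x x y ((curveE2 c).slope x x y y) := by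
  have hx4 := sub_ne_zero.mpr hx
  have hg := (twoIsogX_ne_four_iff c h2 hx).mp hu
  have hy2 := (equation_curveE2_iff c).mp h
  have hy := ne_zero_of_twoIsogX_ne_four c h2 h hx hu
  rw [slope_curveE2 c h2 hy, twoIsogY, div_eq_mul_inv (18 - c), ← inv_pow,
    inv_twoIsogX_sub_four c h2 hx]
  simp only [curveE2, addY, negAddY, addX, negY, div_pow, mul_pow, hy2]
  unfold twoIsogY
  set g := x ^ 2 + 4 * x + 2 * c - 32 with hg_def
  field_simp
  rw [show y ^ 3 = y * y ^ 2 by ring, hy2, hg_def]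
  ring

end TwoIsogeny

section Frobenius

variable {F G : Type*} [Field F] [Field G]

lemma map_twoIsogX (f : F →+* G) (c x : F) : f (twoIsogX c x) = twoIsogX (f c) (f x) := by
  simp only [twoIsogX, map_sub, map_div₀, map_neg, map_ofNat]

lemma map_twoIsogY (f : F →+* G) (c x y : F) :
    f (twoIsogY c x y) = twoIsogY (f c) (f x) (f y) := by
  simp only [twoIsogY, map_mul, map_add, map_div₀, map_neg, map_one, map_pow, map_sub, map_ofNat]

lemma twoIsogY_div (c x y a : F) : twoIsogY c x (y / a) = twoIsogY c x y / a := by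
  simp only [twoIsogY]
  ring

/- `psi (frobenius K p) C₂(s) i` is the paper's `ψ`. -/
def psi (φ : F →+* F) (c i : F) (P : F × F) : F × F :=
  (twoIsogX (φ c) (φ P.1), twoIsogY (φ c) (φ P.1) (φ P.2 / i))

lemma psi_psi {φ : F →+* F} (hφ : Function.Involutive φ) (c i x y : F) :
    psi φ c i (psi φ c i (x, y)) =
      (twoIsogX (φ c) (twoIsogX c x),
        twoIsogY (φ c) (twoIsogX c x) (twoIsogY c x y) / (φ i * i)) := by
  simp only [psi, map_twoIsogX, map_twoIsogY, map_div₀, hφ _, twoIsogY_div, div_div]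

lemma frobenius_involutive_of_card_eq_sq [Fintype F] {p : ℕ} [Fact p.Prime] [CharP F p]
    (hF : Fintype.card F = p ^ 2) : Function.Involutive (frobenius F p) := fun a ↦ by
  rw [frobenius_def, frobenius_def, ← pow_mul, ← sq, ← hF, FiniteField.pow_card]

lemma pow_char_eq_chi8'_mul {p : ℕ} [Fact p.Prime] [CharP F p] (hp2 : p ≠ 2) {i : F}
    (hi : i ^ 2 = -2) : i ^ p = ZMod.χ₈' p * i := by
  have hodd : p = 2 * (p / 2) + 1 := by
    have := (Nat.Prime.mod_two_eq_one_iff_ne_two Fact.out).mpr hp2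
    omega
  have h := congrArg (ZMod.castHom (dvd_refl p) F) (legendreSym.eq_pow p (-2))
  rw [legendreSym.at_neg_two hp2, map_intCast, map_pow, map_intCast] at h
  push_cast at h
  rw [h, ← hi, ← pow_mul, ← pow_succ, ← hodd]

lemma pow_char_mul_self_eq_two_mul_ite {p : ℕ} [Fact p.Prime] [CharP F p] (hp2 : p ≠ 2) {i : F}
    (hi : i ^ 2 = -2) :
    i ^ p * i = 2 * ((if p % 8 = 5 ∨ p % 8 = 7 then 1 else -1 : ℤ) : F) := by
  have hp := (Nat.Prime.mod_two_eq_one_iff_ne_two Fact.out).mpr hp2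
  have hχ : -ZMod.χ₈' p = if p % 8 = 5 ∨ p % 8 = 7 then 1 else -1 := by
    rw [ZMod.χ₈'_nat_eq_if_mod_eight]
    split_ifs <;> first | rfl | omega
  rw [pow_char_eq_chi8'_mul hp2 hi, mul_assoc, ← sq, hi, ← hχ]
  push_cast
  ring

end Frobenius

namespace WeierstrassCurve.Affine.Point

variable {F : Type*} [Field F] [DecidableEq F] {W : WeierstrassCurve.Affine F}
  (ha₁ : W.a₁ = 0) (ha₃ : W.a₃ = 0) {x y : F} (h : W.Nonsingular x y) {ε : ℤ}
  (hε : ε = 1 ∨ ε = -1)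
include ha₁ ha₃ hε

lemma exists_some_intCast_mul_eq_zsmul :
    ∃ h' : W.Nonsingular x (ε * y), some _ _ h' = ε • some _ _ h := by
  rcases hε with rfl | rfl
  · exact ⟨by simpa using h, by simp⟩
  · exact ⟨by simpa [negY, ha₁, ha₃] using (nonsingular_neg ..).mpr h,
      by simp [negY, ha₁, ha₃]⟩

lemma exists_some_double_eq_two_mul_zsmul (hy : y ≠ W.negY x y) :
    ∃ h₂ : W.Nonsingular (W.addX x x (W.slope x x y y)) (ε * W.addY x x y (W.slope x x y y)),
      some _ _ h₂ = (2 * ε) • some _ _ h := by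
  obtain ⟨h₂, hQ⟩ :=
    exists_some_intCast_mul_eq_zsmul ha₁ ha₃ (nonsingular_add h h fun h' => hy h'.2) hε
  exact ⟨h₂, by rw [hQ, ← add_self_of_Y_ne hy, mul_zsmul', two_zsmul]⟩

end WeierstrassCurve.Affine.Point

open Classical in
/-- `ψ ∘ ψ = [2ε]` on affine points of `E_{2,s}(K)` (away from `x = 4`), where
`ε = 1` if `p ≡ 5, 7 (mod 8)` and `ε = −1` if `p ≡ 1, 3 (mod 8)`. -/
theorem degree2_endomorphism_squared
    (p : ℕ) (hp : p.Prime) (hp3 : 3 < p)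
    (K : Type*) [Field K] [Fintype K] (hK : Fintype.card K = p ^ 2)
    (δ : K) (hδ : δ ≠ 0) (hδp : δ ^ p = -δ)
    (s : K) (hs : s ^ p = s)
    (i : K) (hi : i ^ 2 = -2)
    (ε : ℤ) (hε : ε = if p % 8 = 5 ∨ p % 8 = 7 then 1 else -1)
    (W : WeierstrassCurve.Affine K)
    (hW : W = { a₁ := 0, a₂ := 0, a₃ := 0,
                a₄ := 2 * (9 * (1 + s * δ) - 24),
                a₆ := -8 * (9 * (1 + s * δ) - 16) })
    (x y : K) (hP : W.Nonsingular x y) (hx : x ≠ 4)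
    (X Y : K)
    (hX : X = -x ^ p / 2 - (9 * (1 + s * δ)) ^ p / (x ^ p - 4))
    (hY : Y = y ^ p / i * (-1 / 2 + (9 * (1 + s * δ)) ^ p / (x ^ p - 4) ^ 2))
    (hX4 : X ≠ 4)
    (X₂ Y₂ : K)
    (hX₂ : X₂ = -X ^ p / 2 - (9 * (1 + s * δ)) ^ p / (X ^ p - 4))
    (hY₂ : Y₂ = Y ^ p / i * (-1 / 2 + (9 * (1 + s * δ)) ^ p / (X ^ p - 4) ^ 2)) :
    ∃ h₂ : W.Nonsingular X₂ Y₂,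
      WeierstrassCurve.Affine.Point.some _ _ h₂ =
        (2 * ε) • WeierstrassCurve.Affine.Point.some _ _ hP := by
  have : Fact p.Prime := ⟨hp⟩
  have : CharP K p := charP_of_card_eq_prime_pow hK
  have hp2 : p ≠ 2 := by omega
  have h2 : (2 : K) ≠ 0 := mod_cast CharP.cast_ne_zero_of_ne_of_prime K Nat.prime_two hp2
  set c := 9 * (1 + s * δ) with hc
  set φ := frobenius K p
  have hφ := frobenius_involutive_of_card_eq_sq hK
  have hφc : φ c = 18 - c := by
    simp only [φ, hc, map_mul, map_add, map_one, map_ofNat, frobenius_def, hs, hδp]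
    ring
  have hψ : psi φ c i (x, y) = (X, Y) := by
    simp only [psi, twoIsogX, twoIsogY, φ, frobenius_def, hX, hY]
  have hψψ : psi φ c i (X, Y) = (X₂, Y₂) := by
    simp only [psi, twoIsogX, twoIsogY, φ, frobenius_def, hX₂, hY₂]
  rw [← hψ, psi_psi hφ, hφc, frobenius_def, pow_char_mul_self_eq_two_mul_ite hp2 hi, ← hε,
    Prod.mk.injEq] at hψψ
  have hφu : φ (twoIsogX c x) = X := by rw [map_twoIsogX]; exact congrArg Prod.fst hψ
  have hu : twoIsogX c x ≠ 4 := fun h ↦ hX4 (by rw [← hφu, h, map_ofNat])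
  have hWc : W = curveE2 c := hW
  subst hWc
  obtain ⟨hX₂', hY₂'⟩ := hψψ
  rw [twoIsogX_twoIsogX h2 hP.1 hx hu] at hX₂'
  rw [twoIsogY_twoIsogY h2 hP.1 hx hu] at hY₂'
  have hε1 : ε = 1 ∨ ε = -1 := by rw [hε]; split_ifs <;> simp
  obtain rfl : Y₂ = ε * (curveE2 c).addY x x y ((curveE2 c).slope x x y y) := by
    rw [← hY₂']
    rcases hε1 with rfl | rfl <;> push_cast <;> field_simp
  subst hX₂'
  exact Point.exists_some_double_eq_two_mul_zsmul rfl rfl hP hε1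
    (Y_ne_negY_curveE2 c h2 (ne_zero_of_twoIsogX_ne_four c h2 hP.1 hx hu))
end

section
/- Let p > 3 be a prime and K a finite field with p² elements. Fix δ ∈ K with δ ≠ 0 and δ^p = −δ, let s ∈ K satisfy s^p = s, set C₂(s) = 9(1 + sδ), and let E_{2,s} : y² = x³ + 2(C₂(s) − 24)x − 8(C₂(s) − 16) over K. Then the j-invariant of E_{2,s} satisfies j(E_{2,s}) = 2⁶·(5 − 3sδ)³ / ((1 − s²δ²)(1 + sδ)), the denominator being nonzero. -/
/-- The `j`-invariant of `E_{2,s}` is `2⁶·(5 − 3sδ)³ / ((1 − s²δ²)(1 + sδ))`, the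
denominator being nonzero.  (For a Weierstrass curve, `j = c₄³ / Δ`.) -/
theorem degree2_j_invariant
    (p : ℕ) (hp : p.Prime) (hp3 : 3 < p)
    (K : Type*) [Field K] [Fintype K] (hK : Fintype.card K = p ^ 2)
    (δ : K) (hδ : δ ≠ 0) (hδp : δ ^ p = -δ)
    (s : K) (hs : s ^ p = s)
    (W : WeierstrassCurve K)
    (hW : W = { a₁ := 0, a₂ := 0, a₃ := 0,
                a₄ := 2 * (9 * (1 + s * δ) - 24),
                a₆ := -8 * (9 * (1 + s * δ) - 16) }) :
    W.c₄ ^ 3 / W.Δ = 2 ^ 6 * (5 - 3 * s * δ) ^ 3 / ((1 - s ^ 2 * δ ^ 2) * (1 + s * δ)) ∧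
      (1 - s ^ 2 * δ ^ 2) * (1 + s * δ) ≠ 0 := by
  subst hW
  -- The characteristic of K is p
  obtain ⟨q, hq⟩ := CharP.exists K
  have hqp : q.Prime := CharP.char_is_prime K q
  have hpK : (p : K) = 0 := by
    have h0 : ((p : K)) ^ 2 = 0 := by
      have := FiniteField.cast_card_eq_zero K
      rw [hK] at this
      exact_mod_cast this
    exact pow_eq_zero_iff two_ne_zero |>.mp h0
  have hqeq : q = p := by
    have hd : q ∣ p := (CharP.cast_eq_zero_iff K q p).mp hpK
    exact (Nat.prime_dvd_prime_iff_eq hqp hp).mp hd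
  subst hqeq
  have h2 : (2 : K) ≠ 0 := by
    intro h
    have := (CharP.cast_eq_zero_iff K q 2).mp (by exact_mod_cast h)
    have := Nat.le_of_dvd (by norm_num) this
    omega
  have h3 : (3 : K) ≠ 0 := by
    intro h
    have := (CharP.cast_eq_zero_iff K q 3).mp (by exact_mod_cast h)
    have := Nat.le_of_dvd (by norm_num) this
    omega
  have h11 : (1 : K) ≠ -1 := by
    intro h
    apply h2
    linear_combination h
  have hodd : Odd q := hp.odd_of_ne_two (by omega)
  have ht : (s * δ) ^ q = -(s * δ) := by
    rw [mul_pow, hs, hδp]; ring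
  have hp1 : 1 + s * δ ≠ 0 := by
    intro h
    have hsd : s * δ = -1 := by linear_combination h
    rw [hsd, hodd.neg_one_pow] at ht
    exact h11 (by linear_combination -ht)
  have hm1 : 1 - s * δ ≠ 0 := by
    intro h
    have hsd : s * δ = 1 := by linear_combination -h
    rw [hsd, one_pow] at ht
    exact h11 ht
  have hden : (1 - s ^ 2 * δ ^ 2) * (1 + s * δ) ≠ 0 := by
    have hfac : (1 - s ^ 2 * δ ^ 2) * (1 + s * δ)
        = (1 - s * δ) * ((1 + s * δ) * (1 + s * δ)) := by ring
    rw [hfac]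
    exact mul_ne_zero hm1 (mul_ne_zero hp1 hp1)
  refine ⟨?_, hden⟩
  have hΔ : (⟨0, 0, 0, 2 * (9 * (1 + s * δ) - 24),
      -8 * (9 * (1 + s * δ) - 16)⟩ : WeierstrassCurve K).Δ
      = 2 ^ 9 * 3 ^ 6 * ((1 + s * δ) ^ 2 * (1 - s * δ)) := by
    simp only [WeierstrassCurve.Δ, WeierstrassCurve.b₂, WeierstrassCurve.b₄,
      WeierstrassCurve.b₆, WeierstrassCurve.b₈]
    ring
  have hc : (⟨0, 0, 0, 2 * (9 * (1 + s * δ) - 24),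
      -8 * (9 * (1 + s * δ) - 16)⟩ : WeierstrassCurve K).c₄
      = 2 ^ 5 * 3 ^ 2 * (5 - 3 * s * δ) := by
    simp only [WeierstrassCurve.c₄, WeierstrassCurve.b₂, WeierstrassCurve.b₄]
    ring
  rw [hΔ, hc]
  have hΔne : (2 : K) ^ 9 * 3 ^ 6 * ((1 + s * δ) ^ 2 * (1 - s * δ)) ≠ 0 :=
    mul_ne_zero (mul_ne_zero (pow_ne_zero _ h2) (pow_ne_zero _ h3))
      (mul_ne_zero (pow_ne_zero _ hp1) hm1)
  rw [div_eq_div_iff hΔne hden]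
  ring
end

section
/- Let p > 3 be a prime and K a finite field with p² elements. Fix δ ∈ K with δ ≠ 0 and δ^p = −δ, write Δ = δ² (an element of the prime field F_p), and for s in F_p ⊆ K let E_{2,s} : y² = x³ + 2(C₂(s) − 24)x − 8(C₂(s) − 16) with C₂(s) = 9(1 + sδ). If s₁, s₂ ∈ F_p with s₁ ≠ s₂ satisfy j(E_{2,s₁}) = j(E_{2,s₂}), then both (s₁ + s₂)(63·Δ·s₁s₂ − 65) = 0 and (Δ·s₁s₂ + 1)(81·Δ·s₁s₂ − 175) + 49·Δ·(s₁ + s₂)² = 0 hold in F_p. -/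
/-- If `s₁ ≠ s₂` in `F_p` give the same `j`-invariant `j(E_{2,s₁}) = j(E_{2,s₂})`
(with `j = c₄³ / Δ`), then, writing `Δ = δ²`, both
`(s₁ + s₂)(63·Δ·s₁s₂ − 65) = 0` and
`(Δ·s₁s₂ + 1)(81·Δ·s₁s₂ − 175) + 49·Δ·(s₁ + s₂)² = 0` hold. -/
theorem degree2_j_collision
    (p : ℕ) (hp : p.Prime) (hp3 : 3 < p)
    (K : Type*) [Field K] [Fintype K] (hK : Fintype.card K = p ^ 2)
    (δ : K) (hδ : δ ≠ 0) (hδp : δ ^ p = -δ)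
    (s₁ s₂ : K) (hs₁ : s₁ ^ p = s₁) (hs₂ : s₂ ^ p = s₂) (hne : s₁ ≠ s₂)
    (W₁ W₂ : WeierstrassCurve K)
    (hW₁ : W₁ = { a₁ := 0, a₂ := 0, a₃ := 0,
                  a₄ := 2 * (9 * (1 + s₁ * δ) - 24),
                  a₆ := -8 * (9 * (1 + s₁ * δ) - 16) })
    (hW₂ : W₂ = { a₁ := 0, a₂ := 0, a₃ := 0,
                  a₄ := 2 * (9 * (1 + s₂ * δ) - 24),
                  a₆ := -8 * (9 * (1 + s₂ * δ) - 16) })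
    (hj : W₁.c₄ ^ 3 / W₁.Δ = W₂.c₄ ^ 3 / W₂.Δ) :
    (s₁ + s₂) * (63 * δ ^ 2 * (s₁ * s₂) - 65) = 0 ∧
      (δ ^ 2 * (s₁ * s₂) + 1) * (81 * δ ^ 2 * (s₁ * s₂) - 175)
        + 49 * δ ^ 2 * (s₁ + s₂) ^ 2 = 0 := by
  haveI : Fact p.Prime := ⟨hp⟩
  -- characteristic
  have hpK : (p : K) = 0 := by
    have hc : ((Fintype.card K : ℕ) : K) = 0 := Nat.cast_card_eq_zero K
    rw [hK] at hc
    have : ((p : K)) ^ 2 = 0 := by push_cast at hc ⊢; linear_combination hc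
    exact pow_eq_zero_iff (n := 2) (by norm_num) |>.mp this
  haveI : CharP K p := (CharP.charP_iff_prime_eq_zero hp).mpr hpK
  have h2 : (2 : K) ≠ 0 := by
    intro h
    have := (CharP.cast_eq_zero_iff K p 2).mp h
    have := Nat.le_of_dvd (by norm_num) this
    omega
  have h3 : (3 : K) ≠ 0 := by
    intro h
    have := (CharP.cast_eq_zero_iff K p 3).mp h
    have := Nat.le_of_dvd (by norm_num) this
    omega
  have hodd : Odd p := hp.odd_of_ne_two (by omega)
  -- Frobenius facts
  have ht1 : (s₁ * δ) ^ p = -(s₁ * δ) := by rw [mul_pow, hs₁, hδp, mul_neg]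
  have ht2 : (s₂ * δ) ^ p = -(s₂ * δ) := by rw [mul_pow, hs₂, hδp, mul_neg]
  -- discriminants are nonzero
  have hconst : (373248 : K) ≠ 0 := by
    have : (373248 : K) = 2 ^ 9 * 3 ^ 6 := by norm_num
    rw [this]
    exact mul_ne_zero (pow_ne_zero _ h2) (pow_ne_zero _ h3)
  have hΔgen : ∀ s : K, s ^ p = s →
      (WeierstrassCurve.mk (0 : K) 0 0 (2 * (9 * (1 + s * δ) - 24))
        (-8 * (9 * (1 + s * δ) - 16))).Δ ≠ 0 := by
    intro s hs h0
    have htp : (s * δ) ^ p = -(s * δ) := by rw [mul_pow, hs, hδp, mul_neg]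
    simp only [WeierstrassCurve.Δ, WeierstrassCurve.b₂, WeierstrassCurve.b₄,
      WeierstrassCurve.b₆, WeierstrassCurve.b₈] at h0
    have hfac : (-373248 : K) * ((s * δ - 1) * (s * δ + 1) ^ 2) = 0 := by
      linear_combination h0
    have hfac2 : (s * δ - 1) * (s * δ + 1) ^ 2 = 0 := by
      rcases mul_eq_zero.mp hfac with h | h
      · exact absurd h (by intro h'; apply hconst; linear_combination -h')
      · exact h
    rcases mul_eq_zero.mp hfac2 with h | h
    · have h1 : s * δ = 1 := by linear_combination h
      rw [h1, one_pow] at htp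
      exact h2 (by linear_combination htp)
    · have h1 : s * δ = -1 := by
        have := pow_eq_zero_iff (n := 2) (by norm_num) |>.mp h
        linear_combination this
      rw [h1, hodd.neg_one_pow] at htp
      exact h2 (by linear_combination -htp)
  have hΔ1 : W₁.Δ ≠ 0 := hW₁ ▸ hΔgen s₁ hs₁
  have hΔ2 : W₂.Δ ≠ 0 := hW₂ ▸ hΔgen s₂ hs₂
  -- cross-multiplied equation
  have hcross : W₁.c₄ ^ 3 * W₂.Δ = W₂.c₄ ^ 3 * W₁.Δ :=
    (div_eq_div_iff hΔ1 hΔ2).mp hj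
  subst hW₁ hW₂
  simp only [WeierstrassCurve.c₄, WeierstrassCurve.Δ, WeierstrassCurve.b₂,
    WeierstrassCurve.b₄, WeierstrassCurve.b₆, WeierstrassCurve.b₈] at hcross
  -- key polynomial identity
  set g₁ : K := (s₁ + s₂) * (63 * δ ^ 2 * (s₁ * s₂) - 65) with hg₁
  set g₂ : K := (δ ^ 2 * (s₁ * s₂) + 1) * (81 * δ ^ 2 * (s₁ * s₂) - 175)
      + 49 * δ ^ 2 * (s₁ + s₂) ^ 2 with hg₂
  have h12 : ((12 : K) ^ 12 * ((s₁ - s₂) * δ)) ≠ 0 := by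
    apply mul_ne_zero
    · apply pow_ne_zero
      have : (12 : K) = 2 ^ 2 * 3 := by norm_num
      rw [this]; exact mul_ne_zero (pow_ne_zero _ h2) h3
    · exact mul_ne_zero (sub_ne_zero.mpr hne) hδ
  have hkey : ((12 : K) ^ 12 * ((s₁ - s₂) * δ)) * (2 * g₂ - 4 * δ * g₁) = 0 := by
    rw [hg₁, hg₂]
    linear_combination hcross
  have hP : 2 * g₂ - 4 * δ * g₁ = 0 := (mul_eq_zero.mp hkey).resolve_left h12
  -- apply Frobenius
  set φ := frobenius K p with hφ
  have hfδ : φ δ = -δ := by rw [hφ, frobenius_def, hδp]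
  have hfs₁ : φ s₁ = s₁ := by rw [hφ, frobenius_def, hs₁]
  have hfs₂ : φ s₂ = s₂ := by rw [hφ, frobenius_def, hs₂]
  have hP2 := congrArg φ hP
  rw [hg₁, hg₂] at hP2
  simp only [map_sub, map_mul, map_add, map_pow, map_ofNat, map_one, map_zero,
    hfδ, hfs₁, hfs₂] at hP2
  rw [hg₁, hg₂] at hP
  constructor
  · have h8 : ((-8 : K) * δ) * ((s₁ + s₂) * (63 * δ ^ 2 * (s₁ * s₂) - 65)) = 0 := by
      linear_combination hP - hP2
    refine (mul_eq_zero.mp h8).resolve_left ?_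
    apply mul_ne_zero _ hδ
    intro h'
    apply h2
    have : (8 : K) = 0 := by linear_combination -h'
    have h8' : (2 : K) ^ 3 = 0 := by linear_combination this
    exact pow_eq_zero_iff (n := 3) (by norm_num) |>.mp h8'
  · have h4 : (4 : K) * ((δ ^ 2 * (s₁ * s₂) + 1) * (81 * δ ^ 2 * (s₁ * s₂) - 175)
        + 49 * δ ^ 2 * (s₁ + s₂) ^ 2) = 0 := by
      linear_combination hP + hP2
    refine (mul_eq_zero.mp h4).resolve_left ?_
    intro h'
    apply h2
    have h4' : (2 : K) ^ 2 = 0 := by linear_combination h'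
    exact pow_eq_zero_iff (n := 2) (by norm_num) |>.mp h4'
end

section
/- Let p > 3 be a prime and K a finite field with p² elements. Fix δ ∈ K with δ ≠ 0 and δ^p = −δ, and for s in the prime field F_p ⊆ K let E_{2,s} : y² = x³ + 2(C₂(s) − 24)x − 8(C₂(s) − 16) with C₂(s) = 9(1 + sδ). Then the set { j(E_{2,s}) : s ∈ F_p } ⊆ K has cardinality at least p − 3; in particular the family contains at least p − 3 pairwise non-isomorphic elliptic curves over the algebraic closure of K. -/
open Finset in
/-- Combinatorial counting lemma: if every colliding pair has invariant in `T`,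
and the invariant determines the (unordered) pair, then the image loses at most
`T.card` elements. -/
theorem my_count_lemma {α β γ : Type*} [DecidableEq α] [DecidableEq β] [DecidableEq γ]
    (f : α → β) (g : α → α → γ) :
    ∀ (n : ℕ) (s : Finset α) (T : Finset γ), s.card = n →
    (∀ a ∈ s, ∀ b ∈ s, a ≠ b → f a = f b → g a b ∈ T) →
    (∀ a ∈ s, ∀ b ∈ s, ∀ a' ∈ s, ∀ b' ∈ s, a ≠ b → a' ≠ b' → f a = f b → f a' = f b' →
      g a b = g a' b' → (a = a' ∧ b = b') ∨ (a = b' ∧ b = a')) →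
    s.card ≤ (s.image f).card + T.card := by
  intro n
  induction n using Nat.strong_induction_on with
  | _ n ih =>
    intro s T hn h1 h3
    by_cases hinj : ∀ a ∈ s, ∀ b ∈ s, f a = f b → a = b
    · rw [Finset.card_image_of_injOn hinj]
      exact Nat.le_add_right _ _
    · push_neg at hinj
      obtain ⟨a, ha, b, hb, hfab, hab⟩ := hinj
      have hbs : b ∈ s.erase a := Finset.mem_erase.2 ⟨fun h => hab h.symm, hb⟩
      have himg : s.image f = (s.erase a).image f := by
        apply Finset.Subset.antisymm
        · intro x hx
          rw [Finset.mem_image] at hx ⊢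
          obtain ⟨c, hc, hcx⟩ := hx
          by_cases hca : c = a
          · exact ⟨b, hbs, by rw [← hfab, ← hcx, hca]⟩
          · exact ⟨c, Finset.mem_erase.2 ⟨hca, hc⟩, hcx⟩
        · exact Finset.image_subset_image (Finset.erase_subset _ _)
      have hgT : g a b ∈ T := h1 a ha b hb hab hfab
      have hcard : (s.erase a).card = n - 1 := by
        rw [Finset.card_erase_of_mem ha, hn]
      have hlt : n - 1 < n := by
        have : 0 < n := by rw [← hn]; exact Finset.card_pos.2 ⟨a, ha⟩
        omega
      have key := ih (n-1) hlt (s.erase a) (T.erase (g a b)) hcard ?_ ?_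
      · have hTc : (T.erase (g a b)).card + 1 = T.card := Finset.card_erase_add_one hgT
        have hsc : s.card = (s.erase a).card + 1 := by
          rw [Finset.card_erase_of_mem ha]
          have : 0 < s.card := Finset.card_pos.2 ⟨a, ha⟩
          omega
        rw [hsc, himg]; omega
      · intro a' ha' b' hb' hab' hfab'
        have ha's : a' ∈ s := Finset.mem_of_mem_erase ha'
        have hb's : b' ∈ s := Finset.mem_of_mem_erase hb'
        refine Finset.mem_erase.2 ⟨?_, h1 a' ha's b' hb's hab' hfab'⟩
        intro heq
        rcases h3 a' ha's b' hb's a ha b hb hab' hab hfab' hfab heq with ⟨h,_⟩|⟨_,h⟩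
        · exact (Finset.mem_erase.1 ha').1 h
        · exact (Finset.mem_erase.1 hb').1 h
      · intro a₁ h₁ b₁ h₂ a₂ h₃ b₂ h₄
        exact h3 a₁ (Finset.mem_of_mem_erase h₁) b₁ (Finset.mem_of_mem_erase h₂)
          a₂ (Finset.mem_of_mem_erase h₃) b₂ (Finset.mem_of_mem_erase h₄)

/-- The family `E_{2,s}`, for `s` ranging over the prime field `F_p ⊆ K`, takes at
least `p − 3` distinct `j`-invariant values in `K` (with `j = c₄³ / Δ`); in particular
it contains at least `p − 3` pairwise non-isomorphic elliptic curves over `K̄`. -/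
theorem degree2_family_size
    (p : ℕ) (hp : p.Prime) (hp3 : 3 < p)
    (K : Type*) [Field K] [Fintype K] (hK : Fintype.card K = p ^ 2)
    (δ : K) (hδ : δ ≠ 0) (hδp : δ ^ p = -δ)
    (E : K → WeierstrassCurve K)
    (hE : ∀ s : K, E s = { a₁ := 0, a₂ := 0, a₃ := 0,
                           a₄ := 2 * (9 * (1 + s * δ) - 24),
                           a₆ := -8 * (9 * (1 + s * δ) - 16) }) :
    p - 3 ≤ Set.ncard {x : K | ∃ s : K, s ^ p = s ∧ x = (E s).c₄ ^ 3 / (E s).Δ} := by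
  classical
  -- Characteristic of K is p
  obtain ⟨q, hqC⟩ := CharP.exists K
  haveI := hqC
  obtain ⟨n, hqprime, hcard⟩ := FiniteField.card K q
  have hqp : q = p := by
    have hdvd : q ∣ p ^ 2 := by
      rw [← hK, hcard]
      exact dvd_pow_self q (by exact_mod_cast n.ne_zero)
    exact (Nat.prime_dvd_prime_iff_eq hqprime hp).1 (hqprime.dvd_of_dvd_pow hdvd)
  subst hqp
  haveI : Fact q.Prime := ⟨hp⟩
  -- rename for clarity
  set p := q with hpq
  -- basic nonvanishing of small numbers
  have hnz : ∀ m : ℕ, 0 < m → m < p → ((m : K) ≠ 0) := by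
    intro m hm hmp h
    have := (CharP.cast_eq_zero_iff K p m).1 h
    have := Nat.le_of_dvd hm this
    omega
  have h2 : (2 : K) ≠ 0 := by
    have := hnz 2 (by norm_num) (by omega); exact_mod_cast this
  have h3K : (3 : K) ≠ 0 := by
    have := hnz 3 (by norm_num) (by omega); exact_mod_cast this
  -- (s*δ)^2 = 1 is impossible for s in the prime field
  have sq1 : ∀ s : K, s ^ p = s → (s * δ) ^ 2 = 1 → False := by
    intro s hs h1
    obtain ⟨k, hk⟩ := hp.odd_of_ne_two (by omega)
    have hcp : (s * δ) ^ p = s * δ := by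
      calc (s * δ) ^ p = ((s * δ) ^ 2) ^ k * (s * δ) := by rw [hk]; ring
      _ = s * δ := by rw [h1]; ring
    have hcp2 : (s * δ) ^ p = -(s * δ) := by rw [mul_pow, hs, hδp]; ring
    have h4 : (2 : K) * (s * δ) = 0 := by linear_combination hcp2 - hcp
    have h5 : s * δ = 0 := (mul_eq_zero.mp h4).resolve_left h2
    rw [h5] at h1
    simp at h1
  -- Δ never vanishes on the family
  have hΔval : ∀ s : K, (E s).Δ =
      -373248 * ((1 + s * δ) ^ 2 * (1 + s * δ - 2)) := by
    intro s
    rw [hE s]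
    simp only [WeierstrassCurve.Δ, WeierstrassCurve.b₂, WeierstrassCurve.b₄,
      WeierstrassCurve.b₆, WeierstrassCurve.b₈]
    ring
  have hΔ : ∀ s : K, s ^ p = s → (E s).Δ ≠ 0 := by
    intro s hs
    rw [hΔval s]
    have hc : (-373248 : K) ≠ 0 := by
      have : (-373248 : K) = -(2 ^ 9 * 3 ^ 6) := by norm_num
      rw [this]
      exact neg_ne_zero.2 (mul_ne_zero (pow_ne_zero _ h2) (pow_ne_zero _ h3K))
    have ht1 : (1 + s * δ) ≠ 0 := by
      intro h
      exact sq1 s hs (by rw [show s * δ = -1 by linear_combination h]; ring)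
    have ht2 : (1 + s * δ - 2) ≠ 0 := by
      intro h
      exact sq1 s hs (by rw [show s * δ = 1 by linear_combination h]; ring)
    exact mul_ne_zero hc (mul_ne_zero (pow_ne_zero _ ht1) ht2)
  -- main algebraic collision analysis
  set J : K → K := fun s => (E s).c₄ ^ 3 / (E s).Δ with hJ
  have main : ∀ x y : K, x ^ p = x → y ^ p = y → x ≠ y → J x = J y →
      ((x + y = 0 ∨ 63 * δ ^ 2 * (x * y) = 65) ∧
       49 * δ ^ 2 * (x ^ 2 + y ^ 2) + 4 * δ ^ 2 * (x * y)
         + 81 * (δ ^ 2) ^ 2 * (x * y) ^ 2 = 175) := by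
    intro x y hx hy hxy hJxy
    have hcross : (E x).c₄ ^ 3 * (E y).Δ = (E y).c₄ ^ 3 * (E x).Δ :=
      (div_eq_div_iff (hΔ x hx) (hΔ y hy)).1 hJxy
    set A : K := 4 * δ ^ 2 * (x - y) * ((x + y) * (65 - 63 * δ ^ 2 * (x * y))) with hA
    set B : K := 2 * (x - y) * (49 * δ ^ 2 * (x ^ 2 + y ^ 2) + 4 * δ ^ 2 * (x * y)
         + 81 * (δ ^ 2) ^ 2 * (x * y) ^ 2 - 175) with hB
    have hiden : (E x).c₄ ^ 3 * (E y).Δ - (E y).c₄ ^ 3 * (E x).Δ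
        = 8916100448256 * (A + B * δ) := by
      rw [hE x, hE y, hA, hB]
      simp only [WeierstrassCurve.Δ, WeierstrassCurve.c₄, WeierstrassCurve.b₂,
        WeierstrassCurve.b₄, WeierstrassCurve.b₆, WeierstrassCurve.b₈]
      ring
    have hk0 : (8916100448256 : K) ≠ 0 := by
      have : (8916100448256 : K) = 2 ^ 24 * 3 ^ 12 := by norm_num
      rw [this]
      exact mul_ne_zero (pow_ne_zero _ h2) (pow_ne_zero _ h3K)
    have hME : A + B * δ = 0 := by
      have h0 : (8916100448256 : K) * (A + B * δ) = 0 := by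
        rw [← hiden, hcross, sub_self]
      exact (mul_eq_zero.mp h0).resolve_left hk0
    have hconj : A - B * δ = 0 := by
      have h0 := congrArg (frobenius K p) hME
      rw [map_zero] at h0
      rw [← h0, hA, hB]
      simp only [map_add, map_mul, map_sub, map_pow, map_ofNat, frobenius_def]
      rw [hx, hy, hδp]
      ring
    have hA0 : A = 0 := by
      have h4 : (2 : K) * A = 0 := by linear_combination hME + hconj
      exact (mul_eq_zero.mp h4).resolve_left h2
    have hB0 : B = 0 := by
      have h4 : (2 : K) * (B * δ) = 0 := by linear_combination hME - hconj
      exact (mul_eq_zero.mp ((mul_eq_zero.mp h4).resolve_left h2)).resolve_right hδ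
    have hxy' : x - y ≠ 0 := sub_ne_zero.2 hxy
    have hfac : (4 : K) * δ ^ 2 * (x - y) ≠ 0 :=
      mul_ne_zero (mul_ne_zero (by
        have : (4 : K) = 2 ^ 2 := by norm_num
        rw [this]; exact pow_ne_zero _ h2) (pow_ne_zero _ hδ)) hxy'
    constructor
    · have hQ : (x + y) * (65 - 63 * δ ^ 2 * (x * y)) = 0 := by
        apply mul_left_cancel₀ hfac
        rw [mul_zero]
        linear_combination hA0
      rcases mul_eq_zero.mp hQ with h | h
      · exact Or.inl h
      · exact Or.inr (by linear_combination -h)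
    · have hfac2 : (2 : K) * (x - y) ≠ 0 := mul_ne_zero h2 hxy'
      apply mul_left_cancel₀ hfac2
      linear_combination hB0
  -- the finsets
  set S : Finset K := Finset.univ.filter (fun s : K => s ^ p = s) with hS
  set Q : Finset K := Finset.univ.filter (fun e : K => 21609 * δ ^ 2 * e ^ 2 = 81920) with hQdef
  set T : Finset K := insert (0 : K) Q with hT
  -- T has at most 3 elements
  have hTcard : T.card ≤ 3 := by
    have hQcard : Q.card ≤ 2 := by
      by_cases h21609 : (21609 : K) = 0
      · have : Q = ∅ := by
          apply Finset.eq_empty_of_forall_notMem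
          intro e he
          rw [hQdef, Finset.mem_filter] at he
          have h81920 : (81920 : K) = 0 := by
            linear_combination δ ^ 2 * e ^ 2 * h21609 - he.2
          have : (1 : K) = 0 := by
            linear_combination (-33831 : K) * h21609 + (8924 : K) * h81920
          exact one_ne_zero this
        rw [this]; simp
      · rcases Q.eq_empty_or_nonempty with h | ⟨e₀, he₀⟩
        · rw [h]; simp
        · have hsub : Q ⊆ {e₀, -e₀} := by
            intro e he
            rw [hQdef, Finset.mem_filter] at he he₀
            have hc : (21609 : K) * δ ^ 2 ≠ 0 := mul_ne_zero h21609 (pow_ne_zero _ hδ)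
            have hsq : e ^ 2 = e₀ ^ 2 := by
              apply mul_left_cancel₀ hc
              rw [he.2, he₀.2]
            have : (e - e₀) * (e + e₀) = 0 := by linear_combination hsq
            rcases mul_eq_zero.mp this with h | h
            · simp [sub_eq_zero.mp h]
            · simp [show e = -e₀ by linear_combination h]
          calc Q.card ≤ ({e₀, -e₀} : Finset K).card := Finset.card_le_card hsub
          _ ≤ 2 := Finset.card_insert_le _ _ |>.trans (by simp)
    calc T.card ≤ Q.card + 1 := Finset.card_insert_le _ _
    _ ≤ 3 := by omega
  -- h1 : collisions have sum in T
  have hone : ∀ a ∈ S, ∀ b ∈ S, a ≠ b → J a = J b → a + b ∈ T := by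
    intro a ha b hb hab hJab
    rw [hS, Finset.mem_filter] at ha hb
    obtain ⟨hd, hBeq⟩ := main a b ha.2 hb.2 hab hJab
    rcases hd with h | h
    · rw [hT, h]; exact Finset.mem_insert_self _ _
    · rw [hT]
      apply Finset.mem_insert_of_mem
      rw [hQdef, Finset.mem_filter]
      refine ⟨Finset.mem_univ _, ?_⟩
      linear_combination 441 * hBeq + (73 - 567 * δ ^ 2 * (a * b)) * h
  -- h3 : the sum determines the pair
  have hthree : ∀ a ∈ S, ∀ b ∈ S, ∀ a' ∈ S, ∀ b' ∈ S, a ≠ b → a' ≠ b' →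
      J a = J b → J a' = J b' → a + b = a' + b' →
      (a = a' ∧ b = b') ∨ (a = b' ∧ b = a') := by
    intro a ha b hb a' ha' b' hb' hab hab' hJab hJab' hsum
    rw [hS, Finset.mem_filter] at ha hb ha' hb'
    obtain ⟨hd1, hB1⟩ := main a b ha.2 hb.2 hab hJab
    obtain ⟨hd2, hB2⟩ := main a' b' ha'.2 hb'.2 hab' hJab'
    have habab : a * b = a' * b' := by
      by_contra hne
      have hπ : a * b - a' * b' ≠ 0 := sub_ne_zero.2 hne
      have hfac : δ ^ 2 * (a * b - a' * b') *
          (81 * δ ^ 2 * (a * b + a' * b') - 94) = 0 := by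
        linear_combination hB1 - hB2 - 49 * δ ^ 2 * (a + b + a' + b') * hsum
      have h81 : 81 * δ ^ 2 * (a * b + a' * b') = 94 := by
        have := (mul_eq_zero.mp hfac).resolve_left
          (mul_ne_zero (pow_ne_zero _ hδ) hπ)
        linear_combination this
      by_cases he : a + b = 0
      · have he' : a' + b' = 0 := by rw [← hsum]; exact he
        have hq1 : (δ ^ 2 * (a * b) + 1) * (81 * δ ^ 2 * (a * b) - 175) = 0 := by
          linear_combination hB1 - 49 * δ ^ 2 * (a + b) * he
        have hq2 : (δ ^ 2 * (a' * b') + 1) * (81 * δ ^ 2 * (a' * b') - 175) = 0 := by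
          linear_combination hB2 - 49 * δ ^ 2 * (a' + b') * he'
        have hnot1 : ∀ u v : K, u ^ p = u → u + v = 0 → δ ^ 2 * (u * v) + 1 ≠ 0 := by
          intro u v hu huv h
          apply sq1 u hu
          have hv : v = -u := by linear_combination huv
          rw [hv] at h
          linear_combination -h
        have hr1 : 81 * δ ^ 2 * (a * b) - 175 = 0 :=
          (mul_eq_zero.mp hq1).resolve_left (hnot1 a b ha.2 he)
        have hr2 : 81 * δ ^ 2 * (a' * b') - 175 = 0 :=
          (mul_eq_zero.mp hq2).resolve_left (hnot1 a' b' ha'.2 he')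
        have h81K : (81 : K) * δ ^ 2 ≠ 0 := by
          have : (81 : K) = 3 ^ 4 := by norm_num
          exact mul_ne_zero (by rw [this]; exact pow_ne_zero _ h3K) (pow_ne_zero _ hδ)
        have : a * b = a' * b' := by
          apply mul_left_cancel₀ h81K
          linear_combination hr1 - hr2
        exact hne this
      · have he' : a' + b' ≠ 0 := by rw [← hsum]; exact he
        have h63 : 63 * δ ^ 2 * (a * b) = 65 := hd1.resolve_left he
        have h63' : 63 * δ ^ 2 * (a' * b') = 65 := hd2.resolve_left he'
        have h4608 : (4608 : K) = 0 := by
          linear_combination 63 * h81 - 81 * h63 - 81 * h63'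
        have : (4608 : K) ≠ 0 := by
          have : (4608 : K) = 2 ^ 9 * 3 ^ 2 := by norm_num
          rw [this]
          exact mul_ne_zero (pow_ne_zero _ h2) (pow_ne_zero _ h3K)
        exact this h4608
    have hroot : (a' - a) * (a' - b) = 0 := by
      linear_combination -a' * hsum + habab
    rcases mul_eq_zero.mp hroot with h | h
    · have ha'a : a' = a := sub_eq_zero.mp h
      left
      refine ⟨ha'a.symm, ?_⟩
      have : a + b = a + b' := by rw [hsum, ha'a]
      linear_combination this
    · have ha'b : a' = b := sub_eq_zero.mp h
      right
      refine ⟨?_, ha'b.symm⟩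
      have : a + b = b' + b := by rw [hsum, ha'b]; ring
      linear_combination this
  -- |S| ≥ p
  have hScard : p ≤ S.card := by
    have hinj : Function.Injective (ZMod.castHom (dvd_refl p) K) :=
      (ZMod.castHom (dvd_refl p) K).injective
    have himg : (Finset.univ.image (ZMod.castHom (dvd_refl p) K) : Finset K) ⊆ S := by
      intro x hx
      rw [Finset.mem_image] at hx
      obtain ⟨z, _, hz⟩ := hx
      rw [hS, Finset.mem_filter]
      refine ⟨Finset.mem_univ _, ?_⟩
      rw [← hz, ← map_pow, ZMod.pow_card]
    calc p = Fintype.card (ZMod p) := (ZMod.card p).symm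
    _ = (Finset.univ.image (ZMod.castHom (dvd_refl p) K)).card := by
        rw [Finset.card_image_of_injective _ hinj, Finset.card_univ]
    _ ≤ S.card := Finset.card_le_card himg
  -- the target set is the image of S under J
  have hset : {x : K | ∃ s : K, s ^ p = s ∧ x = (E s).c₄ ^ 3 / (E s).Δ}
      = ↑(S.image J) := by
    ext x
    simp only [Set.mem_setOf_eq, Finset.coe_image, Set.mem_image, Finset.mem_coe,
      hS, Finset.mem_filter, Finset.mem_univ, true_and]
    constructor
    · rintro ⟨s, hs, rfl⟩; exact ⟨s, hs, rfl⟩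
    · rintro ⟨s, hs, rfl⟩; exact ⟨s, hs, rfl⟩
  rw [hset, Set.ncard_coe_finset]
  have := my_count_lemma J (fun a b => a + b) S.card S T rfl hone hthree
  omega
end

section
/- Let p > 3 be a prime and K a finite field with p² elements. Fix δ ∈ K with δ ≠ 0 and δ^p = −δ, let s ∈ K satisfy s^p = s, set C₂(s) = 9(1 + sδ), and let E_{2,s} : y² = x³ + 2(C₂(s) − 24)x − 8(C₂(s) − 16) over K. Suppose μ ∈ K satisfies μ² = 96/C₂(s) (note C₂(s) ≠ 0), and set D = 2⁷/(1 + sδ). Then for every affine point (x, y) of E_{2,s}(K), the pair (u, v) = (μ²(x − 4), μ³y) satisfies the doubling-oriented Doche–Icart–Kohel equation v² = u(u² + D·u + 16·D). -/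
/-- Doche–Icart–Kohel model: `C₂(s) ≠ 0`, and if `μ² = 96/C₂(s)` and
`D = 2⁷/(1 + sδ)`, then the map `(x, y) ↦ (μ²(x − 4), μ³y)` sends affine points of
`E_{2,s}` to solutions of the doubling-oriented equation `v² = u(u² + D·u + 16D)`. -/
theorem degree2_dik_model
    (p : ℕ) (hp : p.Prime) (hp3 : 3 < p)
    (K : Type*) [Field K] [Fintype K] (hK : Fintype.card K = p ^ 2)
    (δ : K) (hδ : δ ≠ 0) (hδp : δ ^ p = -δ)
    (s : K) (hs : s ^ p = s)
    (μ : K) (hμ : μ ^ 2 = 96 / (9 * (1 + s * δ)))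
    (D : K) (hD : D = 2 ^ 7 / (1 + s * δ))
    (x y : K)
    (hxy : y ^ 2 = x ^ 3 + 2 * (9 * (1 + s * δ) - 24) * x - 8 * (9 * (1 + s * δ) - 16))
    (u v : K) (hu : u = μ ^ 2 * (x - 4)) (hv : v = μ ^ 3 * y) :
    9 * (1 + s * δ) ≠ 0 ∧ v ^ 2 = u * (u ^ 2 + D * u + 16 * D) := by
  haveI : Fact p.Prime := ⟨hp⟩
  have hchar : ringChar K = p := by
    have hdvd : p ∣ ringChar K := by
      rw [prime_dvd_char_iff_dvd_card, hK]
      exact dvd_pow_self p two_ne_zero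
    have hrprime : (ringChar K).Prime := CharP.char_is_prime K (ringChar K)
    exact ((Nat.prime_dvd_prime_iff_eq hp hrprime).mp hdvd).symm
  haveI : CharP K p := hchar ▸ ringChar.charP K
  have h2 : (2 : K) ≠ 0 := by
    intro h
    have hd : p ∣ 2 := (CharP.cast_eq_zero_iff K p 2).mp (by exact_mod_cast h)
    exact absurd (Nat.le_of_dvd two_pos hd) (by omega)
  have h3 : (3 : K) ≠ 0 := by
    intro h
    have hd : p ∣ 3 := (CharP.cast_eq_zero_iff K p 3).mp (by exact_mod_cast h)
    exact absurd (Nat.le_of_dvd (by norm_num) hd) (by omega)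
  have hA : (1 + s * δ) ≠ 0 := by
    intro h
    have hfro : (s * δ) ^ p = -(s * δ) := by
      rw [mul_pow, hs, hδp]; ring
    have hsd : s * δ = -1 := by linear_combination h
    rw [hsd] at hfro
    have hodd : Odd p := hp.odd_of_ne_two (by omega)
    rw [hodd.neg_one_pow] at hfro
    exact h2 (by linear_combination -hfro)
  have h9 : (9 : K) ≠ 0 := by
    intro h
    apply h3
    have h33 : (3 : K) * 3 = 0 := by linear_combination h
    rcases mul_eq_zero.mp h33 with h' | h' <;> exact h'
  refine ⟨mul_ne_zero h9 hA, ?_⟩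
  have hgen : ∀ A : K, A ≠ 0 → μ ^ 2 = 96 / (9 * A) →
      y ^ 2 = x ^ 3 + 2 * (9 * A - 24) * x - 8 * (9 * A - 16) →
      (μ ^ 3 * y) ^ 2 = (μ ^ 2 * (x - 4)) * ((μ ^ 2 * (x - 4)) ^ 2
        + (2 ^ 7 / A) * (μ ^ 2 * (x - 4)) + 16 * (2 ^ 7 / A)) := by
    intro A hA0 hm hy
    have hm' : μ ^ 2 * (9 * A) = 96 := by
      rw [eq_div_iff (mul_ne_zero h9 hA0)] at hm; exact hm
    have hd : (2 ^ 7 / A) * A = 2 ^ 7 := div_mul_cancel₀ _ hA0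
    apply mul_left_cancel₀ (mul_ne_zero h3 hA0)
    linear_combination (norm := ring1) 3 * A * μ ^ 6 * hy
      + (3 * (2 * x - 8) * μ ^ 4 * A
          + 4 * μ ^ 2 * (x - 4) * (μ ^ 2 * (x - 4) + 16)) * hm'
      - 3 * μ ^ 2 * (x - 4) * (μ ^ 2 * (x - 4) + 16) * hd
  rw [hu, hv, hD]
  exact hgen (1 + s * δ) hA hμ hxy
end

section
/- Let p > 3 be a prime and K a finite field with p² elements. Fix δ ∈ K with δ ≠ 0 and δ^p = −δ, let s ∈ K satisfy s^p = s, set C₃(s) = 2(1 + sδ), and let E_{3,s} be the short Weierstrass curve y² = x³ − 3(2C₃(s) + 1)x + (C₃(s)² + 10C₃(s) − 2) over K. Then the discriminant of E_{3,s} equals 2⁸·3³·(1 − sδ)³·(1 + sδ) and is nonzero; in particular E_{3,s} is an elliptic curve over K. -/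
/-- The discriminant of `E_{3,s} : y² = x³ − 3(2C₃(s) + 1)x + (C₃(s)² + 10C₃(s) − 2)`,
where `C₃(s) = 2(1 + sδ)`, equals `2⁸·3³·(1 − sδ)³·(1 + sδ)` and is nonzero. -/
theorem degree3_family_discriminant
    (p : ℕ) (hp : p.Prime) (hp3 : 3 < p)
    (K : Type*) [Field K] [Fintype K] (hK : Fintype.card K = p ^ 2)
    (δ : K) (hδ : δ ≠ 0) (hδp : δ ^ p = -δ)
    (s : K) (hs : s ^ p = s)
    (W : WeierstrassCurve K)
    (hW : W = { a₁ := 0, a₂ := 0, a₃ := 0,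
                a₄ := -3 * (2 * (2 * (1 + s * δ)) + 1),
                a₆ := (2 * (1 + s * δ)) ^ 2 + 10 * (2 * (1 + s * δ)) - 2 }) :
    W.Δ = 2 ^ 8 * 3 ^ 3 * (1 - s * δ) ^ 3 * (1 + s * δ) ∧ W.Δ ≠ 0 := by
  haveI : Fact p.Prime := ⟨hp⟩
  -- establish the characteristic
  have hcp : CharP K p := by
    obtain ⟨q, hq⟩ := CharP.exists K
    haveI := hq
    have hqp : q.Prime := CharP.char_is_prime K q
    obtain ⟨n, hn, hcard⟩ := FiniteField.card K q
    have hqdvd : q ∣ p ^ 2 := by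
      rw [← hK, hcard]
      exact dvd_pow_self q n.pos.ne'
    have : q = p := (Nat.prime_dvd_prime_iff_eq hqp hp).mp (hqp.dvd_of_dvd_pow hqdvd)
    rwa [this] at hq
  have hchar2 : Fact (2 < p) := ⟨by omega⟩
  have hne : (-1 : K) ≠ 1 := CharP.neg_one_ne_one K p
  have hpodd : Odd p := hp.odd_of_ne_two (by omega)
  have hsd : (s * δ) ^ p = -(s * δ) := by
    rw [mul_pow, hs, hδp, mul_neg]
  have h1 : 1 + s * δ ≠ 0 := by
    intro h
    have hsd1 : s * δ = -1 := by linear_combination h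
    rw [hsd1, hpodd.neg_one_pow, neg_neg] at hsd
    exact hne hsd
  have h2 : 1 - s * δ ≠ 0 := by
    intro h
    have hsd1 : s * δ = 1 := by linear_combination -h
    rw [hsd1, one_pow] at hsd
    exact hne (by linear_combination -hsd)
  have h2K : (2 : K) ≠ 0 := by
    have := (CharP.cast_eq_zero_iff K p 2).not.mpr (fun h => by have := Nat.le_of_dvd (by norm_num) h; omega)
    simpa using this
  have h3K : (3 : K) ≠ 0 := by
    have := (CharP.cast_eq_zero_iff K p 3).not.mpr (fun h => by have := Nat.le_of_dvd (by norm_num) h; omega)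
    simpa using this
  have hΔ : W.Δ = 2 ^ 8 * 3 ^ 3 * (1 - s * δ) ^ 3 * (1 + s * δ) := by
    subst hW
    simp only [WeierstrassCurve.Δ, WeierstrassCurve.b₂, WeierstrassCurve.b₄,
      WeierstrassCurve.b₆, WeierstrassCurve.b₈]
    ring
  refine ⟨hΔ, ?_⟩
  rw [hΔ]
  exact mul_ne_zero (mul_ne_zero (mul_ne_zero (pow_ne_zero _ h2K) (pow_ne_zero _ h3K))
    (pow_ne_zero _ h2)) h1
end

section
/- Let p > 3 be a prime and K a finite field with p² elements. Fix δ ∈ K with δ ≠ 0 and δ^p = −δ, let s ∈ K satisfy s^p = s, set C₃(s) = 2(1 + sδ), and let E_{3,s} : y² = x³ − 3(2C₃(s) + 1)x + (C₃(s)² + 10C₃(s) − 2) over K. Then (3, 2(1 − sδ)) is an affine point of E_{3,s}(K), and it has order exactly 3 in the group E_{3,s}(K). -/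
/-!
The point `P = (3, 4 - c)` lies on `y² = x³ - 3(2c + 1)x + c² + 10c - 2` for every `c`, and the
tangent there has slope `3`, so it meets the curve again at `x = 3² - 3 - 3 = 3`, that is, at `P`
itself. Hence `P` is a flex: `2P = -P`, and `P` has order `3`. With
`c = C₃(s) = 2(1 + sδ)` this is the point `(3, 2(1 - sδ))`, and `c ≠ 4` because `sδ` is negated
by Frobenius while `1` is fixed and the characteristic is odd.
-/

open WeierstrassCurve.Affine

namespace WeierstrassCurve.Affine.Point

variable {F : Type*} [Field F] [DecidableEq F] {W : WeierstrassCurve.Affine F}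

theorem addOrderOf_some_eq_three {x y : F} (h : W.Nonsingular x y) (hy : y ≠ W.negY x y)
    (hx : W.addX x x (W.slope x x y y) = x) : addOrderOf (some _ _ h) = 3 := by
  have hdouble : some _ _ h + some _ _ h = some _ _ (nonsingular_add h h fun hxy => hy hxy.2) :=
    add_self_of_Y_ne hy
  have htriple : some _ _ (nonsingular_add h h fun hxy => hy hxy.2) + some _ _ h = 0 :=
    add_of_Y_eq hx (by rw [addY, negAddY, hx, sub_self, mul_zero, zero_add])
  have : Fact (Nat.Prime 3) := ⟨Nat.prime_three⟩
  refine addOrderOf_eq_prime ?_ (some_ne_zero h)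
  rw [succ_nsmul, two_nsmul, hdouble, htriple]

end WeierstrassCurve.Affine.Point

section CurveE3

variable {F : Type*} [Field F]

def curveE3 (c : F) : WeierstrassCurve.Affine F :=
  { a₁ := 0, a₂ := 0, a₃ := 0, a₄ := -3 * (2 * c + 1), a₆ := c ^ 2 + 10 * c - 2 }

theorem curveE3_equation (c : F) : (curveE3 c).Equation 3 (4 - c) := by
  rw [equation_iff]
  simp only [curveE3]
  ring

theorem curveE3_negY (c : F) : (curveE3 c).negY 3 (4 - c) = -(4 - c) := by
  simp only [negY, curveE3]
  ring

theorem curveE3_Y_ne_negY {c : F} (h2 : (2 : F) ≠ 0) (hc : c ≠ 4) :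
    4 - c ≠ (curveE3 c).negY 3 (4 - c) := by
  rw [curveE3_negY, Ne, ← sub_eq_zero, sub_neg_eq_add, ← two_mul]
  exact mul_ne_zero h2 (sub_ne_zero.mpr hc.symm)

theorem curveE3_slope [DecidableEq F] {c : F} (h2 : (2 : F) ≠ 0) (hc : c ≠ 4) :
    (curveE3 c).slope 3 3 (4 - c) (4 - c) = 3 := by
  have hy := curveE3_Y_ne_negY h2 hc
  rw [slope_of_Y_ne rfl hy, div_eq_iff (sub_ne_zero.mpr hy), curveE3_negY]
  simp only [curveE3]
  ring

theorem curveE3_addOrderOf_eq_three [DecidableEq F] {c : F} (h2 : (2 : F) ≠ 0)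
    (hc : c ≠ 4) :
    ∃ h : (curveE3 c).Nonsingular 3 (4 - c), addOrderOf (Point.some _ _ h) = 3 := by
  have hy := curveE3_Y_ne_negY h2 hc
  have h : (curveE3 c).Nonsingular 3 (4 - c) :=
    (nonsingular_iff 3 (4 - c)).mpr ⟨curveE3_equation c, Or.inr hy⟩
  refine ⟨h, Point.addOrderOf_some_eq_three h hy ?_⟩
  rw [curveE3_slope h2 hc, addX]
  simp only [curveE3]
  ring

end CurveE3

theorem ne_one_of_pow_eq_neg {R : Type*} [Ring R] [Nontrivial R] (hR : ringChar R ≠ 2)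
    {a : R} {n : ℕ} (ha : a ^ n = -a) : a ≠ 1 := by
  rintro rfl
  exact Ring.neg_one_ne_one_of_char_ne_two hR (by rw [← ha, one_pow])

open Classical in
/-- `(3, 2(1 − sδ))` is an affine point of `E_{3,s}(K)` of order exactly `3`. -/
theorem degree3_three_torsion_point
    (p : ℕ) (hp : p.Prime) (hp3 : 3 < p)
    (K : Type*) [Field K] [Fintype K] (hK : Fintype.card K = p ^ 2)
    (δ : K) (hδ : δ ≠ 0) (hδp : δ ^ p = -δ)
    (s : K) (hs : s ^ p = s)
    (W : WeierstrassCurve.Affine K)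
    (hW : W = { a₁ := 0, a₂ := 0, a₃ := 0,
                a₄ := -3 * (2 * (2 * (1 + s * δ)) + 1),
                a₆ := (2 * (1 + s * δ)) ^ 2 + 10 * (2 * (1 + s * δ)) - 2 }) :
    ∃ h : W.Nonsingular 3 (2 * (1 - s * δ)),
      addOrderOf (WeierstrassCurve.Affine.Point.some _ _ h) = 3 := by
  have hchar : ringChar K ≠ 2 := by
    have hodd : Odd (p ^ 2) := (hp.odd_of_ne_two (by omega)).pow
    rw [Ne, FiniteField.even_card_iff_char_two, hK, Nat.odd_iff.mp hodd]
    decide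
  have h2 : (2 : K) ≠ 0 := Ring.two_ne_zero hchar
  have hsδ : s * δ ≠ 1 := ne_one_of_pow_eq_neg hchar (by rw [mul_pow, hs, hδp, mul_neg])
  have hc : 2 * (1 + s * δ) ≠ 4 := fun h =>
    hsδ (mul_left_cancel₀ h2 (by linear_combination h))
  subst hW
  rw [show 2 * (1 - s * δ) = 4 - 2 * (1 + s * δ) by ring]
  exact curveE3_addOrderOf_eq_three h2 hc
end
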